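/- Let s ∈ B be a boundary vertex. Then for every j and every vertex v ∈ R_j, the distance in G from s to v satisfies δ_G(s,v) = min_{b ∈ B_j} ( δ_G(s,b) + δ_j(b,v) ). In particular, the distances in G from a boundary vertex s to all vertices of a region R_j are determined by the distances from s to the boundary vertices of R_j together with the internal distances δ_j of the region. -/

import Mathlib

/-- A directed graph on vertex type `V` with integer edge lengths. -/
structure Digraph' (V : Type) where
  Adj : V → V → Prop
  len : V → V → ℤ

namespace Digraph'

variable {V : Type}

/-- Directed walks in `G` from `u` to `v`. -/
inductive Walk (G : Digraph' V) : V → V → Type where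
  | nil {u : V} : Walk G u u
  | cons {u v w : V} (h : G.Adj u v) (p : Walk G v w) : Walk G u w

/-- The total length (weight) of a walk: the sum of the lengths of its edges. -/
def Walk.weight {G : Digraph' V} : {u v : V} → G.Walk u v → ℤ
  | _, _, .nil => 0
  | u, _, .cons (v := x) _ p => G.len u x + Walk.weight p

/-- The list of vertices visited by a walk. -/
def Walk.support {G : Digraph' V} : {u v : V} → G.Walk u v → List V
  | u, _, .nil => [u]
  | u, _, .cons _ p => u :: Walk.support p

/-- The number of edges of a walk. -/
def Walk.edgeCount {G : Digraph' V} : {u v : V} → G.Walk u v → ℕ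
  | _, _, .nil => 0
  | _, _, .cons _ p => Walk.edgeCount p + 1

/-- The distance from `u` to `v`: the infimum of the total lengths of directed walks
from `u` to `v` (`⊤` if there is no such walk). -/
noncomputable def dist (G : Digraph' V) (u v : V) : EReal :=
  ⨅ p : G.Walk u v, ((Walk.weight p : ℝ) : EReal)

/-- The subgraph of `G` induced by a set `S` of vertices. -/
def induce (G : Digraph' V) (S : Set V) : Digraph' V where
  Adj a b := G.Adj a b ∧ a ∈ S ∧ b ∈ S
  len := G.len

end Digraph'
namespace Digraph'

variable {V : Type}

/-- The region induced by a set `F` of (directed) edges: all vertices incident with an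
edge of `F`. -/
def region (F : Set (V × V)) : Set V :=
  {x : V | ∃ p ∈ F, x = p.1 ∨ x = p.2}

/-- The boundary vertices of the `j`-th region of an edge partition `F`: vertices of the
`j`-th region that also belong to some other region. -/
def boundary {m : ℕ} (F : Fin m → Set (V × V)) (j : Fin m) : Set V :=
  region (F j) ∩ {x : V | ∃ j', j' ≠ j ∧ x ∈ region (F j')}

/-- The directed graph with the same vertices as `G` whose edges are the pairs in `F`
(with lengths inherited from `G`). -/
def partGraph (G : Digraph' V) (F : Set (V × V)) : Digraph' V where
  Adj a b := (a, b) ∈ F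
  len := G.len

end Digraph'

/-!
Every walk from `s` to `v ∈ R_j` either uses only edges of `F_j` (and then `s` itself is a
boundary vertex of `R_j`), or its last edge outside `F_j` ends at a boundary vertex `b` of
`R_j`; cutting it there bounds its weight below by `δ_G(s,b) + δ_j(b,v)`.
Conversely, `δ_G(s,v) ≤ δ_G(s,b) + δ_j(b,v)` is the triangle inequality, which makes sense in
`EReal` because, with no negative cycles and finitely many vertices, a walk can be shortened to
a simple one of no larger weight, so all distances are bounded below.
-/

namespace Digraph'

variable {V : Type} {G : Digraph' V}

namespace Walk

def append : {u v w : V} → G.Walk u v → G.Walk v w → G.Walk u w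
  | _, _, _, .nil, q => q
  | _, _, _, .cons h p, q => .cons h (p.append q)

lemma weight_append {u v w : V} (p : G.Walk u v) (q : G.Walk v w) :
    (p.append q).weight = p.weight + q.weight := by
  induction p with
  | nil => simp [append, weight]
  | cons h p ih => simp only [append, weight, ih]; ring

lemma length_support {u v : V} (p : G.Walk u v) : p.support.length = p.edgeCount + 1 := by
  induction p <;> simp [support, edgeCount, *]

lemma exists_split_of_mem_support {u v x : V} (p : G.Walk u v) (hx : x ∈ p.support) :
    ∃ (p₁ : G.Walk u x) (p₂ : G.Walk x v),
      p₁.weight + p₂.weight = p.weight ∧ p₂.support.Sublist p.support := by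
  induction p with
  | nil =>
    obtain rfl : x = _ := by simpa [support] using hx
    exact ⟨.nil, .nil, by simp [weight], .refl _⟩
  | cons h p ih =>
    rcases List.mem_cons.mp hx with rfl | hx
    · exact ⟨.nil, .cons h p, by simp [weight], .refl _⟩
    · obtain ⟨p₁, p₂, hw, hsub⟩ := ih hx
      exact ⟨.cons h p₁, p₂, by simp only [weight]; omega, hsub.trans (List.sublist_cons_self _ _)⟩

lemma exists_support_nodup_weight_le (hnoneg : ∀ (x : V) (c : G.Walk x x), 0 ≤ c.weight)
    {u v : V} (p : G.Walk u v) : ∃ q : G.Walk u v, q.support.Nodup ∧ q.weight ≤ p.weight := by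
  induction p with
  | nil => exact ⟨.nil, by simp [support], le_rfl⟩
  | @cons u x v h p ih =>
    obtain ⟨q, hq, hqp⟩ := ih
    by_cases hu : u ∈ q.support
    · obtain ⟨q₁, q₂, hw, hsub⟩ := q.exists_split_of_mem_support hu
      have hcycle : 0 ≤ (Walk.cons h q₁).weight := hnoneg _ _
      refine ⟨q₂, hsub.nodup hq, ?_⟩
      simp only [weight] at hcycle ⊢
      omega
    · exact ⟨.cons h q, by simp [support, hq, hu], by simp only [weight]; omega⟩

lemma edgeCount_mul_le_weight {L : ℤ} (hL : ∀ a b, L ≤ G.len a b) {u v : V} (p : G.Walk u v) :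
    p.edgeCount * L ≤ p.weight := by
  induction p with
  | nil => simp [weight, edgeCount]
  | @cons u x v h p ih =>
    simp only [weight, edgeCount]
    push_cast
    linarith [hL u x]

end Walk

lemma exists_le_weight [Fintype V] (hnoneg : ∀ (x : V) (c : G.Walk x x), 0 ≤ c.weight) :
    ∃ K : ℤ, ∀ (u v : V) (p : G.Walk u v), K ≤ p.weight := by
  obtain ⟨L, hL⟩ := (Set.finite_range fun e : V × V => G.len e.1 e.2).bddBelow
  have hL' : ∀ a b, min L 0 ≤ G.len a b := fun a b => (min_le_left _ _).trans (hL ⟨(a, b), rfl⟩)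
  refine ⟨Fintype.card V * min L 0, fun u v p => ?_⟩
  obtain ⟨q, hq, hqp⟩ := p.exists_support_nodup_weight_le hnoneg
  have hcard : (q.edgeCount : ℤ) ≤ Fintype.card V := by
    have := hq.length_le_card
    rw [q.length_support] at this
    omega
  calc (Fintype.card V : ℤ) * min L 0 ≤ q.edgeCount * min L 0 :=
        mul_le_mul_of_nonpos_right hcard (min_le_right _ _)
    _ ≤ q.weight := q.edgeCount_mul_le_weight hL'
    _ ≤ p.weight := hqp

lemma dist_le_weight {u v : V} (p : G.Walk u v) : G.dist u v ≤ ((p.weight : ℝ) : EReal) :=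
  iInf_le _ p

lemma dist_ne_bot [Fintype V] (hnoneg : ∀ (x : V) (c : G.Walk x x), 0 ≤ c.weight) (u v : V) :
    G.dist u v ≠ ⊥ := by
  obtain ⟨K, hK⟩ := exists_le_weight hnoneg
  refine ne_bot_of_le_ne_bot (EReal.coe_ne_bot K) (le_iInf fun p => ?_)
  exact_mod_cast hK u v p

lemma dist_triangle {u v w : V} (huv : G.dist u v ≠ ⊥) (hvw : G.dist v w ≠ ⊥) :
    G.dist u w ≤ G.dist u v + G.dist v w := by
  refine EReal.le_add_of_forall_gt (.inl huv) (.inr hvw) fun a ha b hb => ?_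
  obtain ⟨p, hp⟩ := iInf_lt_iff.mp ha
  obtain ⟨q, hq⟩ := iInf_lt_iff.mp hb
  calc G.dist u w ≤ (((p.append q).weight : ℝ) : EReal) := dist_le_weight _
    _ = ((p.weight : ℝ) : EReal) + ((q.weight : ℝ) : EReal) := by
        rw [Walk.weight_append]; norm_cast
    _ ≤ a + b := add_le_add hp.le hq.le

section partGraph

variable {F : Set (V × V)}

@[simp]
lemma partGraph_len : (G.partGraph F).len = G.len := rfl

def Walk.ofPartGraph (hF : F ⊆ {e | G.Adj e.1 e.2}) :
    {u v : V} → (G.partGraph F).Walk u v → G.Walk u v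
  | _, _, .nil => .nil
  | _, _, .cons h p => .cons (hF h) (Walk.ofPartGraph hF p)

lemma Walk.weight_ofPartGraph (hF : F ⊆ {e | G.Adj e.1 e.2}) {u v : V}
    (p : (G.partGraph F).Walk u v) : (p.ofPartGraph hF).weight = p.weight := by
  induction p <;> simp [ofPartGraph, weight, *]

lemma dist_le_dist_partGraph (hF : F ⊆ {e | G.Adj e.1 e.2}) (u v : V) :
    G.dist u v ≤ (G.partGraph F).dist u v :=
  le_iInf fun p => (dist_le_weight (p.ofPartGraph hF)).trans_eq (by rw [p.weight_ofPartGraph])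

lemma dist_le_dist_add_dist_partGraph [Fintype V]
    (hnoneg : ∀ (x : V) (c : G.Walk x x), 0 ≤ c.weight) (hF : F ⊆ {e | G.Adj e.1 e.2})
    (s b v : V) : G.dist s v ≤ G.dist s b + (G.partGraph F).dist b v :=
  (dist_triangle (dist_ne_bot hnoneg s b) (dist_ne_bot hnoneg b v)).trans
    (add_le_add_right (dist_le_dist_partGraph hF b v) _)

lemma mem_region_left {a b : V} (h : (a, b) ∈ F) : a ∈ region F := ⟨(a, b), h, .inl rfl⟩

lemma mem_region_right {a b : V} (h : (a, b) ∈ F) : b ∈ region F := ⟨(a, b), h, .inr rfl⟩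

lemma Walk.start_mem_region {u v : V} (p : (G.partGraph F).Walk u v) (hv : v ∈ region F) :
    u ∈ region F := by
  cases p with
  | nil => exact hv
  | cons h _ => exact mem_region_left h

end partGraph

lemma mem_boundary_of_mem_region {m : ℕ} {F : Fin m → Set (V × V)} {s : V}
    (hs : ∃ j, s ∈ boundary F j) {j : Fin m} (hsj : s ∈ region (F j)) : s ∈ boundary F j := by
  obtain ⟨j₀, hj₀, j₁, hj₁, hsj₁⟩ := hs
  refine ⟨hsj, ?_⟩
  by_cases h : j₀ = j
  · exact ⟨j₁, h ▸ hj₁, hsj₁⟩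
  · exact ⟨j₀, h, hj₀⟩

lemma Walk.partGraph_or_exists_boundary_split {m : ℕ} {F : Fin m → Set (V × V)}
    (hcover : {e : V × V | G.Adj e.1 e.2} ⊆ ⋃ j, F j) {j : Fin m} {u v : V} (p : G.Walk u v)
    (hv : v ∈ region (F j)) :
    (∃ q : (G.partGraph (F j)).Walk u v, q.weight = p.weight) ∨
      ∃ b ∈ boundary F j, ∃ (p₁ : G.Walk u b) (p₂ : (G.partGraph (F j)).Walk b v),
        p₁.weight + p₂.weight = p.weight := by
  induction p with
  | nil => exact .inl ⟨.nil, rfl⟩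
  | @cons u x w h p ih =>
    obtain ⟨j', hj'⟩ := Set.mem_iUnion.mp (hcover (show (u, x) ∈ {e : V × V | G.Adj e.1 e.2} from h))
    rcases ih hv with ⟨q, hq⟩ | ⟨b, hb, p₁, p₂, hw⟩
    · by_cases hjj' : j' = j
      · subst hjj'
        exact .inl ⟨.cons hj' q, by simp only [weight, partGraph_len, hq]⟩
      · refine .inr ⟨x, ⟨q.start_mem_region hv, j', hjj', mem_region_right hj'⟩,
          .cons h .nil, q, ?_⟩
        simp only [weight]
        omega
    · exact .inr ⟨b, hb, .cons h p₁, p₂, by simp only [weight]; omega⟩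

lemma iInf_boundary_le_dist {m : ℕ} {F : Fin m → Set (V × V)}
    (hcover : {e : V × V | G.Adj e.1 e.2} ⊆ ⋃ j, F j) {s : V} (hs : ∃ j, s ∈ boundary F j)
    {j : Fin m} {v : V} (hv : v ∈ region (F j)) :
    ⨅ b ∈ boundary F j, (G.dist s b + (G.partGraph (F j)).dist b v) ≤ G.dist s v := by
  refine le_iInf fun p => ?_
  rcases p.partGraph_or_exists_boundary_split hcover hv with ⟨q, hq⟩ | ⟨b, hb, p₁, p₂, hw⟩
  · refine (iInf₂_le s (mem_boundary_of_mem_region hs (q.start_mem_region hv))).trans ?_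
    calc G.dist s s + (G.partGraph (F j)).dist s v
        ≤ (((Walk.nil : G.Walk s s).weight : ℝ) : EReal) + ((q.weight : ℝ) : EReal) :=
          add_le_add (dist_le_weight _) (dist_le_weight _)
      _ = ((p.weight : ℝ) : EReal) := by simp [Walk.weight, hq]
  · refine (iInf₂_le b hb).trans ?_
    calc G.dist s b + (G.partGraph (F j)).dist b v
        ≤ ((p₁.weight : ℝ) : EReal) + ((p₂.weight : ℝ) : EReal) :=
          add_le_add (dist_le_weight _) (dist_le_weight _)
      _ = ((p.weight : ℝ) : EReal) := by rw [← hw]; norm_cast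

end Digraph'

theorem stmt11_general {V : Type} [Fintype V] (G : Digraph' V)
    (hnoneg : ∀ (x : V) (p : G.Walk x x), 0 ≤ p.weight)
    (m : ℕ) (F : Fin m → Set (V × V))
    (hcover : (⋃ j, F j) = {p : V × V | G.Adj p.1 p.2})
    (s : V) (hs : ∃ j, s ∈ Digraph'.boundary F j)
    (j : Fin m) (v : V) (hv : v ∈ Digraph'.region (F j)) :
    G.dist s v =
      ⨅ b ∈ Digraph'.boundary F j, (G.dist s b + (G.partGraph (F j)).dist b v) := by
  have hFj : F j ⊆ {e | G.Adj e.1 e.2} := hcover ▸ Set.subset_iUnion F j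
  exact le_antisymm
    (le_iInf₂ fun b _ => Digraph'.dist_le_dist_add_dist_partGraph hnoneg hFj s b v)
    (Digraph'.iInf_boundary_le_dist hcover.ge hs hv)

/-- Let `s ∈ B` be a boundary vertex.  Then for every `j` and every
vertex `v ∈ R j`, `δ_G(s,v) = min_{b ∈ B j} ( δ_G(s,b) + δ_j(b,v) )`: the distances in `G`
from a boundary vertex `s` to all vertices of a region are determined by the distances from
`s` to the boundary vertices of the region together with the internal distances of the
region. -/
theorem stmt11 {V : Type} [Fintype V] (G : Digraph' V)
    (hnoneg : ∀ (x : V) (p : G.Walk x x), 0 ≤ p.weight)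
    (m : ℕ) (F : Fin m → Set (V × V))
    (hcover : (⋃ j, F j) = {p : V × V | G.Adj p.1 p.2})
    (hdisj : Pairwise fun a b => Disjoint (F a) (F b))
    (s : V) (hs : ∃ j, s ∈ Digraph'.boundary F j)
    (j : Fin m) (v : V) (hv : v ∈ Digraph'.region (F j)) :
    G.dist s v =
      ⨅ b ∈ Digraph'.boundary F j, (G.dist s b + (G.partGraph (F j)).dist b v) :=
  stmt11_general G hnoneg m F hcover s hs j v hv
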